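/- arXiv:2411.17892 — 2 statements merged into one kernel-verified Lean document; each statement's English description precedes it below -/
import Mathlib

section
/- Let K be a field, let P, Q be polynomials in K[x_1,...,x_n], let R be a commutative local domain with maximal ideal m, and let π_1,...,π_n ∈ R be such that Q(π) ≠ 0 and P(π)/Q(π) ∈ R (i.e. Q(π) divides P(π) in R). Let φ_1,...,φ_n ∈ R satisfy φ_i − π_i ∈ Q(π)·m for all i. Then Q(φ) ≠ 0 and Q(φ) divides P(φ) in R; in fact Q(φ) = Q(π)·u for some u ∈ R with u ≡ 1 mod m (hence u is a unit). -/
open MvPolynomial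

/-!
Evaluation of a polynomial is compatible with congruences modulo any ideal, so
`Q(φ) ≡ Q(π)` and `P(φ) ≡ P(π)` modulo `Q(π)·m`. The first congruence says
`Q(φ) = Q(π)·u` with `u ∈ 1 + m`, a unit of the local ring; the second gives
`Q(π) ∣ P(φ)`, and `Q(φ)` is associated to `Q(π)`.
-/

theorem MvPolynomial.aeval_sub_aeval_mem {σ K R : Type*} [CommSemiring K] [CommRing R]
    [Algebra K R] (I : Ideal R) {φ π : σ → R} (h : ∀ i, φ i - π i ∈ I)
    (F : MvPolynomial σ K) : aeval φ F - aeval π F ∈ I := by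
  rw [← Ideal.Quotient.eq]
  have hmk : ∀ ψ : σ → R,
      Ideal.Quotient.mk I (aeval ψ F) = aeval (fun i => Ideal.Quotient.mk I (ψ i)) F :=
    fun ψ => comp_aeval_apply (f := ψ) (Ideal.Quotient.mkₐ K I) F
  rw [hmk, hmk]
  congr 2 with i
  exact Ideal.Quotient.eq.2 (h i)

namespace IsLocalRing

variable {R : Type*} [CommRing R] [IsLocalRing R]

theorem isUnit_of_sub_one_mem_maximalIdeal {u : R} (h : u - 1 ∈ maximalIdeal R) :
    IsUnit u :=
  isUnit_of_mem_nonunits_one_sub_self u (by simpa using (maximalIdeal R).neg_mem h)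

theorem exists_eq_mul_sub_one_mem_of_sub_mem_span_mul {a b : R}
    (h : b - a ∈ Ideal.span {a} * maximalIdeal R) :
    ∃ u, b = a * u ∧ u - 1 ∈ maximalIdeal R := by
  obtain ⟨z, hz, hza⟩ := Ideal.mem_span_singleton_mul.1 h
  exact ⟨1 + z, by linear_combination -hza, by simpa using hz⟩

end IsLocalRing

theorem stmt5_general {K R : Type*} [Field K] [CommRing R] [IsLocalRing R]
    [Algebra K R] {n : ℕ} (P Q : MvPolynomial (Fin n) K) (π φ : Fin n → R)
    (hQπ : aeval π Q ≠ 0) (hdvd : aeval π Q ∣ aeval π P)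
    (hφ : ∀ i, ∃ x ∈ IsLocalRing.maximalIdeal R, φ i - π i = aeval π Q * x) :
    aeval φ Q ≠ 0 ∧ aeval φ Q ∣ aeval φ P ∧
      ∃ u : R, aeval φ Q = aeval π Q * u ∧ u - 1 ∈ IsLocalRing.maximalIdeal R := by
  let I := Ideal.span {aeval π Q} * IsLocalRing.maximalIdeal R
  have hφI : ∀ i, φ i - π i ∈ I := fun i => by
    obtain ⟨x, hx, hxe⟩ := hφ i
    exact Ideal.mem_span_singleton_mul.2 ⟨x, hx, hxe.symm⟩
  obtain ⟨u, hQu, hu⟩ := IsLocalRing.exists_eq_mul_sub_one_mem_of_sub_mem_span_mul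
    (aeval_sub_aeval_mem I hφI Q)
  have hassoc : Associated (aeval π Q) (aeval φ Q) :=
    ⟨(IsLocalRing.isUnit_of_sub_one_mem_maximalIdeal hu).unit, hQu.symm⟩
  have hPφ : aeval π Q ∣ aeval φ P - aeval π P :=
    Ideal.mem_span_singleton.1 (Ideal.mul_le_left (aeval_sub_aeval_mem I hφI P))
  refine ⟨hassoc.ne_zero_iff.1 hQπ, hassoc.dvd_iff_dvd_left.1 ?_, u, hQu, hu⟩
  simpa using dvd_add hPφ hdvd

/-- Let `K` be a field, `P, Q ∈ K[x_1,…,x_n]`, `R` a local domain which is a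
`K`-algebra, with maximal ideal `m`, and `π : Fin n → R` with `Q(π) ≠ 0` and
`Q(π) ∣ P(π)`. If `φ : Fin n → R` satisfies `φ i − π i ∈ Q(π)·m` for all `i`,
then `Q(φ) ≠ 0`, `Q(φ) ∣ P(φ)`, and in fact `Q(φ) = Q(π)·u` with `u ≡ 1 mod m`. -/
theorem stmt5 {K R : Type*} [Field K] [CommRing R] [IsDomain R] [IsLocalRing R]
    [Algebra K R] {n : ℕ} (P Q : MvPolynomial (Fin n) K) (π φ : Fin n → R)
    (hQπ : aeval π Q ≠ 0) (hdvd : aeval π Q ∣ aeval π P)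
    (hφ : ∀ i, ∃ x ∈ IsLocalRing.maximalIdeal R, φ i - π i = aeval π Q * x) :
    aeval φ Q ≠ 0 ∧ aeval φ Q ∣ aeval φ P ∧
      ∃ u : R, aeval φ Q = aeval π Q * u ∧ u - 1 ∈ IsLocalRing.maximalIdeal R :=
  stmt5_general P Q π φ hQπ hdvd hφ
end

section
/- Let K be a field, R a local domain with maximal ideal n that is a K-algebra, and suppose F : K^n ⇢ K^k is a rational map with coordinates F_i = P_i/Q_i, P_i, Q_i ∈ K[x_1,...,x_n]. Let ψ = (ψ_1,...,ψ_n) and π = (π_1,...,π_n) be tuples in R such that for each i, Q_i(π) ≠ 0 and Q_i(π) divides P_i(π) in R, and ψ_j − π_j ∈ (Q_1(π)···Q_k(π))·n for all j. Then for each i, Q_i(ψ) ≠ 0 and Q_i(ψ) divides P_i(ψ) in R. -/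
open MvPolynomial

/-- Multi-coordinate version of Lemma 2.4: `R` a local domain and `K`-algebra
with maximal ideal `n`; `P_i, Q_i ∈ K[x_1,…,x_n]`; `π, ψ ∈ R^n` with
`Q_i(π) ≠ 0`, `Q_i(π) ∣ P_i(π)` for each `i`, and
`ψ_j − π_j ∈ (Q_1(π)⋯Q_k(π))·n` for all `j`. Then `Q_i(ψ) ≠ 0` and
`Q_i(ψ) ∣ P_i(ψ)` for each `i`. -/
theorem stmt18 {K R : Type*} [Field K] [CommRing R] [IsDomain R] [IsLocalRing R]
    [Algebra K R] {n k : ℕ} (P Q : Fin k → MvPolynomial (Fin n) K)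
    (π ψ : Fin n → R)
    (hQ : ∀ i, aeval π (Q i) ≠ 0)
    (hdvd : ∀ i, aeval π (Q i) ∣ aeval π (P i))
    (hψ : ∀ j, ∃ x ∈ IsLocalRing.maximalIdeal R,
      ψ j - π j = (∏ i, aeval π (Q i)) * x) :
    ∀ i, aeval ψ (Q i) ≠ 0 ∧ aeval ψ (Q i) ∣ aeval ψ (P i) := by
  classical
  set q := ∏ i, aeval π (Q i) with hq
  set I : Ideal R := Ideal.span {q} * IsLocalRing.maximalIdeal R with hI
  have key : ∀ f : MvPolynomial (Fin n) K, ∃ m ∈ IsLocalRing.maximalIdeal R,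
      aeval ψ f = aeval π f + q * m := by
    intro f
    have hmem : ∀ j, ψ j - π j ∈ I := by
      intro j
      obtain ⟨x, hx, hxe⟩ := hψ j
      rw [hxe]
      exact Ideal.mul_mem_mul (Ideal.mem_span_singleton_self q) hx
    have hsub : aeval ψ f - aeval π f ∈ I := by
      have h1 : (Ideal.Quotient.mkₐ K I).comp (aeval ψ)
          = (Ideal.Quotient.mkₐ K I).comp (aeval π) := by
        rw [MvPolynomial.comp_aeval, MvPolynomial.comp_aeval]
        congr 1
        funext j
        simpa [Ideal.Quotient.mkₐ_eq_mk, Ideal.Quotient.eq] using hmem j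
      have h2 := congrArg (fun g : MvPolynomial (Fin n) K →ₐ[K] R ⧸ I => g f) h1
      simp only [AlgHom.comp_apply, Ideal.Quotient.mkₐ_eq_mk] at h2
      exact Ideal.Quotient.eq.mp h2
    rw [Ideal.mem_span_singleton_mul] at hsub
    obtain ⟨m, hm, hqm⟩ := hsub
    exact ⟨m, hm, by linear_combination -hqm⟩
  intro i
  obtain ⟨mQ, hmQ, hQi⟩ := key (Q i)
  obtain ⟨mP, hmP, hPi⟩ := key (P i)
  set c := ∏ j ∈ Finset.univ.erase i, aeval π (Q j) with hc
  have hqfact : q = aeval π (Q i) * c := by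
    rw [hq, hc, ← Finset.mul_prod_erase _ _ (Finset.mem_univ i)]
  have hQψ : aeval ψ (Q i) = aeval π (Q i) * (1 + c * mQ) := by
    rw [hQi, hqfact]; ring
  have hunit : IsUnit (1 + c * mQ) := by
    have hmem : -(c * mQ) ∈ IsLocalRing.maximalIdeal R :=
      neg_mem (Ideal.mul_mem_left _ _ hmQ)
    have := IsLocalRing.isUnit_one_sub_self_of_mem_nonunits _
      ((IsLocalRing.mem_maximalIdeal _).mp hmem)
    simpa using this
  obtain ⟨u, hu⟩ := hunit
  constructor
  · rw [hQψ, ← hu]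
    exact mul_ne_zero (hQ i) u.ne_zero
  · have h1 : aeval ψ (Q i) ∣ aeval π (Q i) := by
      refine ⟨(↑u⁻¹ : R), ?_⟩
      rw [hQψ, ← hu, mul_assoc]
      simp
    obtain ⟨a, ha⟩ := hdvd i
    have h2 : aeval π (Q i) ∣ aeval ψ (P i) := by
      refine ⟨a + c * mP, ?_⟩
      rw [hPi, ha, hqfact]; ring
    exact h1.trans h2
end
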